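/- For any prime p ≥ 5 and any integer i with 1 ≤ i ≤ p−1, the polynomial ([p−1]!_q / ([i]!_q · [p−i]!_q))^2 · q^{i^2} · (1−q^i)^2 is congruent to q^i modulo [p]_q in ℤ[q]. -/
import Mathlib

open Polynomial Finset

noncomputable def qInt (n : ℕ) : Polynomial ℤ := ∑ i ∈ Finset.range n, X ^ i

noncomputable def qBinom : ℕ → ℕ → Polynomial ℤ
  | _, 0 => 1
  | 0, _ + 1 => 0
  | n + 1, k + 1 => qBinom n k + X ^ (k + 1) * qBinom n (k + 1)

lemma qInt_add (a b : ℕ) : qInt (a + b) = qInt a + X ^ a * qInt b := by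
  induction b with
  | zero => simp [qInt]
  | succ b ih =>
    rw [show a + (b + 1) = (a + b) + 1 by omega]
    simp only [qInt, Finset.sum_range_succ] at *
    rw [ih]
    ring

lemma qInt_mul_sub (n : ℕ) : qInt n * (1 - X) = 1 - X ^ n := by
  have := geom_sum_mul (X : Polynomial ℤ) n
  have : qInt n * (X - 1) = X ^ n - 1 := this
  linear_combination -this

lemma qBinom_eq_zero {n k : ℕ} (h : n < k) : qBinom n k = 0 := by
  induction n generalizing k with
  | zero => cases k with
    | zero => omega
    | succ m => rfl
  | succ n ih =>
    cases k with
    | zero => omega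
    | succ m =>
      rw [qBinom, ih (by omega), ih (by omega)]
      ring

lemma qBinom_L (n : ℕ) : ∀ k : ℕ, qBinom n (k + 1) * qInt (k + 1) = qInt (n - k) * qBinom n k := by
  induction n with
  | zero =>
    intro k
    rw [qBinom_eq_zero (by omega)]
    cases k with
    | zero => simp [qInt]
    | succ m => rw [qBinom_eq_zero (by omega)]; ring
  | succ n ih =>
    intro k
    rw [show qBinom (n+1) (k+1) = qBinom n k + X ^ (k + 1) * qBinom n (k + 1) from rfl]
    cases k with
    | zero =>
      simp only [qBinom, Nat.sub_zero]
      have hq1 : qInt 1 = 1 := by simp [qInt]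
      have h1 : qInt (1 + n) = qInt 1 + X ^ 1 * qInt n := qInt_add 1 n
      have h0 := ih 0
      rw [Nat.sub_zero] at h0
      rw [show n + 1 = 1 + n by omega, h1, hq1] at *
      rw [show qBinom n 0 = 1 by cases n <;> rfl] at h0
      linear_combination X * h0
    | succ m =>
      by_cases hmn : m + 1 ≤ n
      · have e1 : qInt ((m+2) + (n - (m+1))) = qInt (m+2) + X ^ (m+2) * qInt (n-(m+1)) := qInt_add _ _
        have e2 : qInt ((m+1) + (n - m)) = qInt (m+1) + X ^ (m+1) * qInt (n-m) := qInt_add _ _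
        rw [show (m+2)+(n-(m+1)) = n+1 by omega] at e1
        rw [show (m+1)+(n-m) = n+1 by omega] at e2
        have key := e1.symm.trans e2
        have ihm := ih m
        have ihm1 := ih (m+1)
        rw [show qBinom (n+1) (m+1) = qBinom n m + X ^ (m + 1) * qBinom n (m + 1) from rfl,
          show n + 1 - (m+1) = n - m from by omega]
        linear_combination X ^ (m+2) * ihm1 + qBinom n (m+1) * key + ihm
      · rw [qBinom_eq_zero (show n < m + 1 by omega),
          qBinom_eq_zero (show n < m + 2 by omega),
          show n + 1 - (m + 1) = 0 by omega,
          show qInt 0 = 0 by simp [qInt]]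
        ring

lemma qBinom_absorb {n j : ℕ} (hj : j ≤ n) :
    qBinom (n + 1) (j + 1) * qInt (j + 1) = qInt (n + 1) * qBinom n j := by
  rw [show qBinom (n+1) (j+1) = qBinom n j + X ^ (j + 1) * qBinom n (j + 1) from rfl]
  have hL := qBinom_L n j
  calc (qBinom n j + X ^ (j + 1) * qBinom n (j + 1)) * qInt (j + 1)
      = qBinom n j * qInt (j+1) + X ^ (j+1) * (qBinom n (j+1) * qInt (j+1)) := by ring
    _ = qBinom n j * qInt (j+1) + X ^ (j+1) * (qInt (n - j) * qBinom n j) := by rw [hL]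
    _ = qBinom n j * (qInt (j+1) + X ^ (j+1) * qInt (n - j)) := by ring
    _ = qInt (n + 1) * qBinom n j := by
        rw [← qInt_add, show (j + 1) + (n - j) = n + 1 by omega]; ring

def tri : ℕ → ℕ
  | 0 => 0
  | j + 1 => tri j + (j + 1)

lemma two_tri (j : ℕ) : 2 * tri j = j * (j + 1) := by
  induction j with
  | zero => rfl
  | succ j ih =>
    show 2 * (tri j + (j + 1)) = _
    ring_nf
    ring_nf at ih
    omega

lemma qInt_eq_cyclotomic (p : ℕ) (hp : p.Prime) : qInt p = cyclotomic p ℤ := by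
  haveI : Fact p.Prime := ⟨hp⟩
  rw [cyclotomic_prime]
  rfl

lemma qInt_prime (p : ℕ) (hp : p.Prime) : Prime (qInt p) := by
  rw [qInt_eq_cyclotomic p hp]
  exact (cyclotomic.irreducible hp.pos).prime

lemma qInt_ne_zero (n : ℕ) (hn : 1 ≤ n) : qInt n ≠ 0 := by
  intro h
  have := congrArg (Polynomial.eval (1 : ℤ)) h
  simp [qInt, Polynomial.eval_finset_sum] at this
  omega

lemma qInt_natDegree_le (n : ℕ) : (qInt n).natDegree ≤ n - 1 := by
  refine Polynomial.natDegree_sum_le_of_forall_le _ _ fun i hi => ?_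
  simp only [Finset.mem_range] at hi
  rw [Polynomial.natDegree_X_pow]
  omega

lemma qInt_not_dvd (p j : ℕ) (hp : p.Prime) (hj : j + 1 ≤ p - 1) :
    ¬ qInt p ∣ qInt (j + 1) := by
  intro h
  have h1 := Polynomial.natDegree_le_of_dvd h (qInt_ne_zero (j+1) (by omega))
  have h2 : (qInt p).natDegree = p - 1 := by
    rw [qInt_eq_cyclotomic p hp, Polynomial.natDegree_cyclotomic, Nat.totient_prime hp]
  have h3 := qInt_natDegree_le (j + 1)
  omega

lemma qInt_dvd_X_pow_sub_one (p : ℕ) : qInt p ∣ X ^ p - 1 :=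
  ⟨X - 1, (geom_sum_mul X p).symm⟩

lemma keyM (p : ℕ) (hp : p.Prime) :
    ∀ j, j ≤ p - 1 → qInt p ∣ qBinom (p - 1) j * X ^ tri j - (-1) ^ j := by
  intro j
  induction j with
  | zero =>
    intro _
    rw [show qBinom (p-1) 0 = 1 by cases (p-1) <;> rfl]
    simp [tri]
  | succ j ih =>
    intro hj
    have hprime := qInt_prime p hp
    have hndvd := qInt_not_dvd p j hp hj
    have hdvd : qInt p ∣ qInt (j+1) * (qBinom (p-1) (j+1) * X ^ tri (j+1) - (-1) ^ (j+1)) := by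
      obtain ⟨a, ha⟩ := ih (by omega)
      obtain ⟨b, hb⟩ := qInt_dvd_X_pow_sub_one p
      have hL := qBinom_L (p-1) j
      have hsplit : qInt p = qInt (p - 1 - j) + X ^ (p - 1 - j) * qInt (j + 1) := by
        have := qInt_add (p - 1 - j) (j + 1)
        rwa [show (p - 1 - j) + (j + 1) = p by omega] at this
      have h2 : (X : Polynomial ℤ) ^ (p - 1 - j) * X ^ (j + 1) = X ^ p := by
        rw [← pow_add, show (p - 1 - j) + (j + 1) = p by omega]
      refine ⟨qBinom (p-1) j * (X ^ tri j * X ^ (j+1)) - qInt (j+1) * (X ^ p * a + (-1)^j * b), ?_⟩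
      rw [show tri (j+1) = tri j + (j + 1) from rfl, pow_add]
      linear_combination (X ^ tri j * X ^ (j+1)) * hL
        - (qBinom (p-1) j * X ^ tri j * X ^ (j+1)) * hsplit
        - (qInt (j+1) * qBinom (p-1) j * X ^ tri j) * h2
        - (qInt (j+1) * X ^ p) * ha
        - (qInt (j+1) * (-1)^j) * hb
    rcases hprime.dvd_mul.mp hdvd with h | h
    · exact absurd h hndvd
    · exact h

theorem term_congruence (p : ℕ) (hp : p.Prime) (hp5 : 5 ≤ p) (i : ℕ) (hi1 : 1 ≤ i)
    (hi2 : i ≤ p - 1) :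
    (qInt p) ^ 3 ∣
      (qBinom p i) ^ 2 * X ^ (i ^ 2) * (1 - X ^ i) ^ 2 -
        X ^ i * (qInt p) ^ 2 * (1 - X) ^ 2 := by
  obtain ⟨j, rfl⟩ : ∃ j, i = j + 1 := ⟨i - 1, by omega⟩
  have hK : qBinom p (j+1) * qInt (j+1) = qInt p * qBinom (p-1) j := by
    have := qBinom_absorb (n := p - 1) (j := j) (by omega)
    rwa [show p - 1 + 1 = p by omega] at this
  have hgeo : qInt (j+1) * (1 - X) = 1 - X ^ (j+1) := qInt_mul_sub _
  have hK2 : qBinom p (j+1) * (1 - X ^ (j+1)) = qInt p * qBinom (p-1) j * (1 - X) := by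
    rw [← hgeo]
    linear_combination (1 - X) * hK
  obtain ⟨a, ha⟩ := keyM p hp j (by omega)
  have hexp : (j + 1) ^ 2 = (j + 1) + (tri j + tri j) := by
    have h := two_tri j
    ring_nf
    ring_nf at h
    omega
  have he : ((-1 : Polynomial ℤ) ^ j) * ((-1 : Polynomial ℤ) ^ j) = 1 := by
    rw [← pow_add, ← two_mul, pow_mul]
    norm_num
  have hdvd2 : (qBinom (p-1) j) ^ 2 * X ^ ((j+1) ^ 2) - X ^ (j+1) =
      qInt p * (X ^ (j+1) * a * (qBinom (p-1) j * X ^ tri j + (-1)^j)) := by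
    rw [hexp, pow_add, pow_add]
    linear_combination (X ^ (j+1) * (qBinom (p-1) j * X ^ tri j + (-1)^j)) * ha
      + X ^ (j+1) * he
  refine ⟨(1 - X) ^ 2 * (X ^ (j+1) * a * (qBinom (p-1) j * X ^ tri j + (-1)^j)), ?_⟩
  linear_combination (qBinom p (j+1) * (1 - X ^ (j+1)) + qInt p * qBinom (p-1) j * (1 - X)) * X ^ ((j+1)^2) * hK2
    + (qInt p) ^ 2 * (1 - X) ^ 2 * hdvd2
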